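/- arXiv:1109.2296 — 4 statements merged into one kernel-verified Lean document; each statement's English description precedes it below -/
import Mathlib

section
/- Let X_1, …, X_N be independent real-valued random variables on a probability space, with E[X_i] = 0 and a_i ≤ X_i ≤ b_i almost surely for each i, and let S_i = X_1 + ⋯ + X_i. Then for every ε > 0, P( max_{1 ≤ i ≤ N} |S_i| > ε ) ≤ 2·exp( − ε² / Σ_{i=1}^N (b_i − a_i)² ). -/
/-!
By Hoeffding's lemma each `X i` is sub-Gaussian with variance proxy `(b i - a i)² / 4`, so
`E[exp (L * S N)] ≤ exp (L² D / 8)` where `D = ∑ i, (b i - a i)²`. For `L ≥ 0`, split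
`{∃ i, ε < S i}` according to the first index `i` with `ε < S i`. That piece is determined by the
`X j` with `j ≤ i`, hence independent of `S N - S i`, whose exponential moment is at least `1`
because its mean is `0`; so the integral of `exp (L * S i)` over it is at most that of
`exp (L * S N)`. Summing over `i` gives the Doob-type bound
`exp (L ε) P(∃ i, ε < S i) ≤ E[exp (L * S N)]`, and `L = 4ε / D` yields `exp (-2ε² / D)`.
Applying this to `-X` as well gives the two-sided bound.
-/

open MeasureTheory ProbabilityTheory Real Finset Function
open scoped NNReal

namespace ProbabilityTheory

section FirstPassage

variable {Ω ι : Type*} [LinearOrder ι] (S : ι → Ω → ℝ) (ε : ℝ)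

def firstPassageSet (i : ι) : Set Ω := {ω | ε < S i ω ∧ ∀ j < i, S j ω ≤ ε}

lemma pairwise_disjoint_firstPassageSet : Pairwise (Disjoint on firstPassageSet S ε) := by
  intro i k hik
  wlog h : i < k generalizing i k
  · exact (this hik.symm (hik.lt_or_gt.resolve_left h)).symm
  exact Set.disjoint_left.2 fun ω hi hk => (hk.2 i h).not_gt hi.1

lemma iUnion_firstPassageSet [WellFoundedLT ι] :
    ⋃ i, firstPassageSet S ε i = {ω | ∃ i, ε < S i ω} := by
  ext ω
  simp only [firstPassageSet, Set.mem_iUnion, Set.mem_ofPred_eq]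
  refine ⟨fun ⟨i, hi, _⟩ => ⟨i, hi⟩, fun ⟨i, hi⟩ => ?_⟩
  obtain ⟨k, hk, hmin⟩ := wellFounded_lt.has_min {j | ε < S j ω} ⟨i, hi⟩
  exact ⟨k, hk, fun j hj => not_lt.1 fun h => hmin j h hj⟩

lemma measurableSet_firstPassageSet [Countable ι] {m : MeasurableSpace Ω} {i : ι}
    (hS : ∀ j ≤ i, Measurable[m] (S j)) : MeasurableSet[m] (firstPassageSet S ε i) := by
  refine (measurableSet_lt measurable_const (hS i le_rfl)).inter ?_
  show MeasurableSet {ω | ∀ j < i, S j ω ≤ ε}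
  simp only [Set.ofPred_forall]
  exact .iInter fun j => .iInter fun hj => measurableSet_le (hS j hj.le) measurable_const

end FirstPassage

lemma one_le_mgf_of_integral_eq_zero {Ω : Type*} {m : MeasurableSpace Ω} {μ : Measure Ω}
    [IsProbabilityMeasure μ] {X : Ω → ℝ} {t : ℝ} (hX : Integrable X μ) (hmean : μ[X] = 0)
    (hexp : Integrable (fun ω => exp (t * X ω)) μ) : 1 ≤ mgf X μ t :=
  calc 1 = ∫ ω, (1 + t * X ω) ∂μ := by
        rw [integral_add (integrable_const 1) (hX.const_mul t), integral_const_mul, hmean]; simp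
    _ ≤ mgf X μ t :=
        integral_mono ((integrable_const 1).add (hX.const_mul t)) hexp fun ω => by
          linarith [add_one_le_exp (t * X ω)]

section MaximalInequality

variable {Ω ι : Type*} {m : MeasurableSpace Ω} {μ : Measure Ω}
  [Fintype ι] [LinearOrder ι] [LocallyFiniteOrderBot ι] {X : ι → Ω → ℝ} {L : ℝ}

abbrev history (X : ι → Ω → ℝ) (i : ι) : Ω → (Iic i → ℝ) := fun ω j => X j ω

lemma iIndepFun.setIntegral_exp_mul_sum_Iic_le (hindep : iIndepFun X μ)
    (hmeas : ∀ j, Measurable (X j)) (hmgf : ∀ j, 1 ≤ mgf (X j) μ L) (i : ι) {B : Set Ω}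
    (hB : MeasurableSet[.comap (history X i) inferInstance] B) :
    ∫ ω in B, exp (L * ∑ j ∈ Iic i, X j ω) ∂μ ≤ ∫ ω in B, exp (L * ∑ j, X j ω) ∂μ := by
  set F : Ω → ℝ := B.indicator fun ω => exp (L * ∑ j ∈ Iic i, X j ω)
  set G : Ω → ℝ := fun ω => exp (L * ∑ j ∈ (Iic i)ᶜ, X j ω)
  set future : Ω → (((Iic i)ᶜ : Finset ι) → ℝ) := fun ω j => X j ω
  have hhist : Measurable (history X i) := measurable_pi_lambda _ fun j => hmeas j
  have hfuture : Measurable future := measurable_pi_lambda _ fun j => hmeas j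
  have hF_hist : Measurable[.comap (history X i) inferInstance] F := by
    refine Measurable.indicator (measurable_exp.comp ((measurable_const_mul L).comp
      (Finset.measurable_sum _ fun j hj => ?_))) hB
    exact (measurable_pi_apply ⟨j, hj⟩).comp (comap_measurable (history X i))
  have hG_future : Measurable[.comap future inferInstance] G :=
    measurable_exp.comp ((measurable_const_mul L).comp (Finset.measurable_sum _ fun j hj =>
      (measurable_pi_apply (⟨j, hj⟩ : ((Iic i)ᶜ : Finset ι))).comp (comap_measurable future)))
  have hFG : IndepFun F G μ := by
    have := hindep.indepFun_finset (Iic i) _ disjoint_compl_right hmeas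
    rw [IndepFun_iff_Indep] at this ⊢
    exact indep_of_indep_of_le_right (indep_of_indep_of_le_left this hF_hist.comap_le)
      hG_future.comap_le
  have hBmeas : MeasurableSet B := hhist.comap_le B hB
  have hG_integral : 1 ≤ ∫ ω, G ω ∂μ := by
    have : ∫ ω, G ω ∂μ = ∏ j ∈ (Iic i)ᶜ, mgf (X j) μ L := by
      rw [← hindep.mgf_sum hmeas]
      simp only [mgf, G, Finset.sum_apply]
    rw [this, ← prod_const_one]
    exact prod_le_prod (fun _ _ => zero_le_one) fun j _ => hmgf j
  calc ∫ ω in B, exp (L * ∑ j ∈ Iic i, X j ω) ∂μ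
      = (∫ ω, F ω ∂μ) * 1 := by rw [mul_one, integral_indicator hBmeas]
    _ ≤ (∫ ω, F ω ∂μ) * ∫ ω, G ω ∂μ := by
        gcongr
        exact integral_nonneg fun ω => Set.indicator_nonneg (fun _ _ => (exp_pos _).le) ω
    _ = ∫ ω, F ω * G ω ∂μ := (hFG.integral_fun_mul_eq_mul_integral
          (hF_hist.mono hhist.comap_le le_rfl).aestronglyMeasurable
          (hG_future.mono hfuture.comap_le le_rfl).aestronglyMeasurable).symm
    _ = ∫ ω in B, exp (L * ∑ j, X j ω) ∂μ := by
        rw [← integral_indicator hBmeas]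
        congr 1 with ω
        by_cases hω : ω ∈ B
        · simp only [F, G, Set.indicator_of_mem hω, ← exp_add, ← mul_add, sum_add_sum_compl]
        · simp [F, hω]

theorem iIndepFun.exp_mul_mul_measureReal_exists_lt_sum_Iic_le (hindep : iIndepFun X μ)
    (hmeas : ∀ j, Measurable (X j)) (hexp : ∀ j, Integrable (fun ω => exp (L * X j ω)) μ)
    (hmgf : ∀ j, 1 ≤ mgf (X j) μ L) (hL : 0 ≤ L) (ε : ℝ) :
    exp (L * ε) * μ.real {ω | ∃ i, ε < ∑ j ∈ Iic i, X j ω} ≤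
      mgf (fun ω => ∑ j, X j ω) μ L := by
  have := hindep.isProbabilityMeasure
  set S : ι → Ω → ℝ := fun i ω => ∑ j ∈ Iic i, X j ω
  set B := firstPassageSet S ε
  have hexpS (s : Finset ι) : Integrable (fun ω => exp (L * ∑ j ∈ s, X j ω)) μ := by
    simpa only [Finset.sum_apply] using hindep.integrable_exp_mul_sum hmeas fun j _ => hexp j
  have hB_hist (i : ι) : MeasurableSet[.comap (history X i) inferInstance] (B i) := by
    refine measurableSet_firstPassageSet S ε fun k hk => Finset.measurable_sum _ fun j hj => ?_
    exact (measurable_pi_apply ⟨j, (mem_Iic.1 hj).trans hk |> mem_Iic.2⟩).comp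
      (comap_measurable (history X i))
  have hB (i : ι) : MeasurableSet (B i) :=
    (measurable_pi_lambda _ fun j => hmeas j : Measurable (history X i)).comap_le _ (hB_hist i)
  calc exp (L * ε) * μ.real {ω | ∃ i, ε < S i ω}
      = ∑ i, μ.real (B i) * exp (L * ε) := by
        rw [← iUnion_firstPassageSet, measureReal_iUnion_fintype
          (pairwise_disjoint_firstPassageSet S ε) hB, mul_comm, sum_mul]
    _ ≤ ∑ i, ∫ ω in B i, exp (L * S i ω) ∂μ := by
        gcongr with i
        refine setIntegral_ge_of_const_le (hB i) (measure_ne_top _ _) (fun ω hω => ?_)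
          (hexpS _).integrableOn
        exact exp_le_exp.2 (mul_le_mul_of_nonneg_left hω.1.le hL)
    _ ≤ ∑ i, ∫ ω in B i, exp (L * ∑ j, X j ω) ∂μ :=
        sum_le_sum fun i _ => hindep.setIntegral_exp_mul_sum_Iic_le hmeas hmgf i (hB_hist i)
    _ = ∫ ω in ⋃ i, B i, exp (L * ∑ j, X j ω) ∂μ :=
        (integral_iUnion_fintype hB (pairwise_disjoint_firstPassageSet S ε)
          fun _ => (hexpS _).integrableOn).symm
    _ ≤ mgf (fun ω => ∑ j, X j ω) μ L :=
        setIntegral_le_integral (hexpS _) (ae_of_all _ fun _ => (exp_pos _).le)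

theorem iIndepFun.measureReal_exists_lt_sum_Iic_le_of_hasSubgaussianMGF
    (hindep : iIndepFun X μ) (hmeas : ∀ j, Measurable (X j)) {c : ι → ℝ≥0}
    (hsubG : ∀ j, HasSubgaussianMGF (X j) (c j) μ) (hmean : ∀ j, μ[X j] = 0) {ε : ℝ}
    (hε : 0 ≤ ε) :
    μ.real {ω | ∃ i, ε < ∑ j ∈ Iic i, X j ω} ≤ exp (-ε ^ 2 / (2 * ∑ j, c j)) := by
  have := hindep.isProbabilityMeasure
  rcases (∑ j, c j).coe_nonneg.eq_or_lt with hC | hC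
  · rw [← hC, mul_zero, div_zero, exp_zero]
    exact measureReal_le_one
  set L := ε / ∑ j, c j with hL
  have hchernoff := (hindep.exp_mul_mul_measureReal_exists_lt_sum_Iic_le hmeas
    (fun j => (hsubG j).integrable_exp_mul L)
    (fun j => one_le_mgf_of_integral_eq_zero (hsubG j).integrable (hmean j)
      ((hsubG j).integrable_exp_mul L)) (by positivity) ε).trans
    ((HasSubgaussianMGF.sum_of_iIndepFun hindep fun j _ => hsubG j).mgf_le L)
  rw [← le_div_iff₀' (exp_pos _), ← exp_sub] at hchernoff
  refine hchernoff.trans_eq (congrArg exp ?_)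
  rw [hL]
  field_simp
  ring

theorem iIndepFun.measureReal_exists_lt_abs_sum_Iic_le_of_hasSubgaussianMGF
    (hindep : iIndepFun X μ) (hmeas : ∀ j, Measurable (X j)) {c : ι → ℝ≥0}
    (hsubG : ∀ j, HasSubgaussianMGF (X j) (c j) μ) (hmean : ∀ j, μ[X j] = 0) {ε : ℝ}
    (hε : 0 ≤ ε) :
    μ.real {ω | ∃ i, ε < |∑ j ∈ Iic i, X j ω|} ≤ 2 * exp (-ε ^ 2 / (2 * ∑ j, c j)) := by
  have := hindep.isProbabilityMeasure
  have hindep_neg : iIndepFun (fun j => -X j) μ := hindep.comp _ fun _ => measurable_neg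
  have hneg : μ.real {ω | ∃ i, ε < ∑ j ∈ Iic i, (-X j) ω} ≤ exp (-ε ^ 2 / (2 * ∑ j, c j)) :=
    hindep_neg.measureReal_exists_lt_sum_Iic_le_of_hasSubgaussianMGF (fun j => (hmeas j).neg)
      (fun j => (hsubG j).neg) (fun j => by rw [integral_neg', hmean j, neg_zero]) hε
  have hpos := hindep.measureReal_exists_lt_sum_Iic_le_of_hasSubgaussianMGF hmeas hsubG hmean hε
  have hsub : {ω | ∃ i, ε < |∑ j ∈ Iic i, X j ω|} ⊆
      {ω | ∃ i, ε < ∑ j ∈ Iic i, X j ω} ∪ {ω | ∃ i, ε < ∑ j ∈ Iic i, (-X j) ω} := by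
    rintro ω ⟨i, hi⟩
    simp only [Pi.neg_apply, sum_neg_distrib]
    exact (lt_abs.1 hi).imp (⟨i, ·⟩) (⟨i, ·⟩)
  calc μ.real {ω | ∃ i, ε < |∑ j ∈ Iic i, X j ω|}
      ≤ μ.real {ω | ∃ i, ε < ∑ j ∈ Iic i, X j ω} +
        μ.real {ω | ∃ i, ε < ∑ j ∈ Iic i, (-X j) ω} :=
        (measureReal_mono hsub).trans (measureReal_union_le _ _)
    _ ≤ 2 * exp (-ε ^ 2 / (2 * ∑ j, c j)) := by linarith

end MaximalInequality

end ProbabilityTheory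

theorem maximal_hoeffding_two_sided_general
    {Ω : Type*} [MeasureSpace Ω] [IsProbabilityMeasure (ℙ : Measure Ω)]
    (N : ℕ) (X : Fin N → Ω → ℝ) (a b : Fin N → ℝ)
    (hmeas : ∀ i, Measurable (X i))
    (hindep : iIndepFun X ℙ)
    (hmean : ∀ i, ∫ ω, X i ω ∂ℙ = 0)
    (hbound : ∀ i, ∀ᵐ ω ∂ℙ, a i ≤ X i ω ∧ X i ω ≤ b i)
    (ε : ℝ) (hε : 0 < ε) :
    ℙ {ω | ∃ i : Fin N, ε < |∑ j ∈ Finset.Iic i, X j ω|} ≤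
      ENNReal.ofReal (2 * Real.exp (-(ε ^ 2) / ∑ i : Fin N, (b i - a i) ^ 2)) := by
  have hsubG (i : Fin N) : HasSubgaussianMGF (X i) ((‖b i - a i‖₊ / 2) ^ 2) ℙ :=
    hasSubgaussianMGF_of_mem_Icc_of_integral_eq_zero (hmeas i).aemeasurable (hbound i) (hmean i)
  set D := ∑ i, (b i - a i) ^ 2
  have hvar : ((∑ i, (‖b i - a i‖₊ / 2) ^ 2 : ℝ≥0) : ℝ) = D / 4 := by
    push_cast [coe_nnnorm, Real.norm_eq_abs, div_pow, sq_abs]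
    rw [sum_div]
    norm_num
  have hD : -ε ^ 2 / D ≤ 0 := div_nonpos_of_nonpos_of_nonneg (by nlinarith) (by positivity)
  rw [← ofReal_measureReal]
  refine ENNReal.ofReal_le_ofReal ((hindep.measureReal_exists_lt_abs_sum_Iic_le_of_hasSubgaussianMGF
    hmeas hsubG hmean hε.le).trans ?_)
  rw [hvar]
  gcongr 2 * exp ?_
  linarith [show -ε ^ 2 / (2 * (D / 4)) = 2 * (-ε ^ 2 / D) by ring]

/-- **Maximal Hoeffding inequality.** If `X 1, …, X N` are independent, zero-mean,
with `a i ≤ X i ≤ b i` a.s., and `S i = X 1 + ⋯ + X i`, then for every `ε > 0`,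
`P(max_{1 ≤ i ≤ N} |S i| > ε) ≤ 2·exp(−ε² / ∑ i (b i − a i)²)`. -/
theorem maximal_hoeffding_two_sided
    {Ω : Type*} [MeasureSpace Ω] [IsProbabilityMeasure (ℙ : Measure Ω)]
    (N : ℕ) (X : Fin N → Ω → ℝ) (a b : Fin N → ℝ)
    (hmeas : ∀ i, Measurable (X i))
    (hindep : iIndepFun X ℙ)
    (hint : ∀ i, Integrable (X i) ℙ)
    (hmean : ∀ i, ∫ ω, X i ω ∂ℙ = 0)
    (hbound : ∀ i, ∀ᵐ ω ∂ℙ, a i ≤ X i ω ∧ X i ω ≤ b i)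
    (ε : ℝ) (hε : 0 < ε) :
    ℙ {ω | ∃ i : Fin N, ε < |∑ j ∈ Finset.Iic i, X j ω|} ≤
      ENNReal.ofReal (2 * Real.exp (-(ε ^ 2) / ∑ i : Fin N, (b i - a i) ^ 2)) :=
  maximal_hoeffding_two_sided_general N X a b hmeas hindep hmean hbound ε hε
end

section
/- Consider the line graph setup with n nodes and suppose each edge sample satisfies −1 ≤ E_t^{i,i+1} ≤ 1 almost surely. Fix ε > 0 and δ ∈ (0,1), set ε̃ = max(ε, u), and suppose the per-edge sample sizes T^1, …, T^{n−1} satisfy ( Σ_{i=1}^{n−1} 4 / T^i )^{−1} ≥ (1/ε̃²)·log(2/δ). Then the node k maximizing the empirical prefix sums Ŝ_1, …, Ŝ_n satisfies r_k ≥ r* − ε with probability at least 1 − δ. -/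
/-!
Let `a` be a node of maximal reward. If the empirical maximiser `k` had `r k < r* - ε`, then
`Ŝ k ≥ Ŝ a` forces the noise `(Ŝ k - Ŝ a) - (r k - r a)` accumulated on the edges between `a`
and `k` to be at least `r a - r k ≥ ε̃`. So the bad event lies in the union of two events: the
partial sums of the centred samples, read edge by edge from `a` to the right or to the left,
reach `ε̃`. By Hoeffding's lemma these partial sums have independent sub-Gaussian increments with
total variance proxy at most `∑ 1 / T i`; Doob's maximal inequality for the submartingale
`exp (λ S m)` then bounds each event by `exp (-2 ε̃² / ∑ 4 / T i) ≤ δ / 2`, with no union bound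
over the `n` nodes.
-/

open MeasureTheory ProbabilityTheory Real Finset

section Chain

variable {Ω ι : Type*} {Z : ι → Ω → ℝ}

lemma measurable_sum_iSup_comap (F : Finset ι) :
    Measurable[⨆ i ∈ F, MeasurableSpace.comap (Z i) inferInstance] fun ω => ∑ i ∈ F, Z i ω :=
  Finset.measurable_fun_sum F fun i hi =>
    (comap_measurable (Z i)).mono (le_iSup₂_of_le i hi le_rfl) le_rfl

variable [MeasurableSpace Ω] {μ : Measure Ω} {C : ℕ → Finset ι}

def chainFiltration (hZ : ∀ i, Measurable (Z i)) (hC : Monotone C) :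
    Filtration ℕ ‹MeasurableSpace Ω› where
  seq j := ⨆ i ∈ C j, MeasurableSpace.comap (Z i) inferInstance
  mono' _ _ hjk := biSup_mono fun _ hi => hC hjk hi
  le' _ := iSup₂_le fun i _ => (hZ i).comap_le

lemma one_le_integral_exp_mul_of_integral_eq_zero [IsProbabilityMeasure μ] {Y : Ω → ℝ} {L : ℝ}
    (hY : Integrable Y μ) (hexp : Integrable (fun ω => exp (L * Y ω)) μ) (hmean : μ[Y] = 0) :
    1 ≤ ∫ ω, exp (L * Y ω) ∂μ := by
  have h : ∫ ω, (1 + L * Y ω) ∂μ ≤ ∫ ω, exp (L * Y ω) ∂μ :=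
    integral_mono ((integrable_const 1).add (hY.const_mul L)) hexp
      fun ω => by simpa [add_comm] using add_one_le_exp (L * Y ω)
  rwa [integral_add (integrable_const 1) (hY.const_mul L), integral_const_mul, hmean,
    integral_const, probReal_univ, one_smul, mul_zero, add_zero] at h

variable [IsProbabilityMeasure μ] {c : ι → NNReal}

theorem submartingale_exp_mul_chainSum (hZ : ∀ i, Measurable (Z i)) (hindep : iIndepFun Z μ)
    (hsubG : ∀ i, HasSubgaussianMGF (Z i) (c i) μ) (hmean : ∀ i, μ[Z i] = 0)
    (hC : Monotone C) (L : ℝ) :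
    Submartingale (fun j ω => exp (L * ∑ i ∈ C j, Z i ω)) (chainFiltration hZ hC) μ := by
  classical
  have hexp (F : Finset ι) :=
    (HasSubgaussianMGF.sum_of_iIndepFun hindep (s := F) fun i _ => hsubG i).integrable_exp_mul L
  refine submartingale_of_setIntegral_le
    (fun j => ((measurable_sum_iSup_comap (C j)).const_mul L).exp.stronglyMeasurable)
    (fun j => hexp (C j)) fun j k hjk s hs => ?_
  set D := C k \ C j
  set f : Ω → ℝ := s.indicator fun ω => exp (L * ∑ i ∈ C j, Z i ω)
  set g : Ω → ℝ := fun ω => exp (L * ∑ i ∈ D, Z i ω)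
  have hsplit : s.indicator (fun ω => exp (L * ∑ i ∈ C k, Z i ω)) = f * g := by
    ext ω
    simp only [f, g, Pi.mul_apply, ← sum_sdiff (hC hjk), Set.indicator_apply, D]
    split_ifs <;> simp [← exp_add, mul_add, add_comm]
  have hf_meas : Measurable[chainFiltration hZ hC j] f :=
    ((measurable_sum_iSup_comap (C j)).const_mul L).exp.indicator hs
  have hindep_fg : IndepFun f g μ := by
    rw [IndepFun_iff_Indep]
    refine indep_of_indep_of_le_right (indep_of_indep_of_le_left ?_ hf_meas.comap_le)
      ((measurable_sum_iSup_comap D).const_mul L).exp.comap_le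
    exact indep_iSup_of_disjoint (fun i => (hZ i).comap_le) ((iIndepFun_iff_iIndep _ _ _).1 hindep)
      (S := (C j : Set ι)) (T := (D : Set ι)) (by simpa [D] using Set.disjoint_sdiff_right)
  have hf_nonneg : 0 ≤ ∫ ω, f ω ∂μ :=
    integral_nonneg fun ω => Set.indicator_nonneg (fun ω _ => (exp_pos _).le) ω
  have hD_int : Integrable (fun ω => ∑ i ∈ D, Z i ω) μ :=
    integrable_finsetSum _ fun i _ => (hsubG i).integrable
  have hD_mean : μ[fun ω => ∑ i ∈ D, Z i ω] = 0 := by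
    rw [integral_finsetSum _ fun i _ => (hsubG i).integrable]
    simp [hmean]
  have hs' := (chainFiltration hZ hC).le j s hs
  calc ∫ ω in s, exp (L * ∑ i ∈ C j, Z i ω) ∂μ = ∫ ω, f ω ∂μ := (integral_indicator hs').symm
    _ ≤ (∫ ω, f ω ∂μ) * ∫ ω, g ω ∂μ := le_mul_of_one_le_right hf_nonneg
        (one_le_integral_exp_mul_of_integral_eq_zero hD_int (hexp D) hD_mean)
    _ = ∫ ω, (f * g) ω ∂μ := (hindep_fg.integral_mul_eq_mul_integral
        (hf_meas.mono ((chainFiltration hZ hC).le j) le_rfl).aestronglyMeasurable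
        (hexp D).aestronglyMeasurable).symm
    _ = ∫ ω in s, exp (L * ∑ i ∈ C k, Z i ω) ∂μ := by rw [← hsplit, integral_indicator hs']

theorem measure_exists_le_chainSum_le (hZ : ∀ i, Measurable (Z i)) (hindep : iIndepFun Z μ)
    (hsubG : ∀ i, HasSubgaussianMGF (Z i) (c i) μ) (hmean : ∀ i, μ[Z i] = 0)
    (hC : Monotone C) (N : ℕ) {s v : ℝ} (hs : 0 ≤ s) (hv : ∑ i ∈ C N, (c i : ℝ) ≤ v) :
    μ {ω | ∃ j ≤ N, s ≤ ∑ i ∈ C j, Z i ω} ≤ ENNReal.ofReal (exp (-s ^ 2 / (2 * v))) := by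
  rcases (sum_nonneg fun i _ => (c i).coe_nonneg).trans hv |>.eq_or_lt with rfl | hv_pos
  · -- `-s ^ 2 / (2 * 0) = 0`, so the bound is `1`
    simpa using prob_le_one
  -- the Chernoff-optimal parameter, minimising `v * L ^ 2 / 2 - L * s`
  set L := s / v
  set f : ℕ → Ω → ℝ := fun j ω => exp (L * ∑ i ∈ C j, Z i ω)
  have hmax := maximal_ineq (submartingale_exp_mul_chainSum hZ hindep hsubG hmean hC L)
    (fun j ω => (exp_pos _).le) (ε := (exp (L * s)).toNNReal) N
  have hevent : {ω | ∃ j ≤ N, s ≤ ∑ i ∈ C j, Z i ω} ⊆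
      {ω | ((exp (L * s)).toNNReal : ℝ) ≤
        (range (N + 1)).sup' nonempty_range_add_one fun k => f k ω} := by
    rintro ω ⟨j, hj, hsj⟩
    rw [Set.mem_ofPred_eq, Real.coe_toNNReal _ (exp_pos _).le]
    exact (exp_le_exp.2 (mul_le_mul_of_nonneg_left hsj (by positivity))).trans
      (le_sup' (fun k => f k ω) (mem_range.2 (Nat.lt_succ_of_le hj)))
  have hmgf : ∫ ω, f N ω ∂μ ≤ exp (v * L ^ 2 / 2) :=
    ((HasSubgaussianMGF.sum_of_iIndepFun hindep fun i _ => hsubG i).mgf_le L).trans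
      (exp_le_exp.2 (by gcongr; push_cast; exact hv))
  have hexponent : v * L ^ 2 / 2 - L * s = -s ^ 2 / (2 * v) := by
    simp only [L]; field_simp; ring
  have hbound : ENNReal.ofReal (exp (L * s)) * μ {ω | ∃ j ≤ N, s ≤ ∑ i ∈ C j, Z i ω} ≤
      ENNReal.ofReal (exp (v * L ^ 2 / 2)) :=
    calc _ ≤ _ := mul_le_mul_right (measure_mono hevent) _
      _ ≤ _ := hmax
      _ ≤ ENNReal.ofReal (∫ ω, f N ω ∂μ) := ENNReal.ofReal_le_ofReal <|
          setIntegral_le_integral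
            ((HasSubgaussianMGF.sum_of_iIndepFun hindep fun i _ => hsubG i).integrable_exp_mul L)
            (ae_of_all _ fun ω => (exp_pos _).le)
      _ ≤ _ := ENNReal.ofReal_le_ofReal hmgf
  calc μ _ = ENNReal.ofReal (exp (-(L * s))) * (ENNReal.ofReal (exp (L * s)) * μ _) := by
        rw [← mul_assoc, ← ENNReal.ofReal_mul (exp_pos _).le, ← exp_add, neg_add_cancel, exp_zero,
          ENNReal.ofReal_one, one_mul]
    _ ≤ ENNReal.ofReal (exp (-(L * s))) * ENNReal.ofReal (exp (v * L ^ 2 / 2)) := by gcongr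
    _ = _ := by rw [← ENNReal.ofReal_mul (exp_pos _).le, ← exp_add, ← hexponent, neg_add_eq_sub]

end Chain

section Line

variable {n : ℕ}

def edgesIco (n a b : ℕ) : Finset (Fin n) := {i | a ≤ (i : ℕ) ∧ (i : ℕ) < b}

lemma sum_edgesIco_eq_sub {M : Type*} [AddCommGroup M] (f : Fin n → M) {a b : ℕ} (hab : a ≤ b) :
    ∑ i ∈ edgesIco n a b, f i = ∑ i ∈ univ.filter (fun i : Fin n => (i : ℕ) < b), f i -
      ∑ i ∈ univ.filter (fun i : Fin n => (i : ℕ) < a), f i := by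
  rw [eq_sub_iff_add_eq, ← sum_union]
  · congr 1
    ext i
    simp only [edgesIco, mem_union, mem_filter, mem_univ, true_and]
    omega
  · simp only [edgesIco, disjoint_left, mem_filter, mem_univ, true_and]
    omega

lemma sum_filter_lt_succ_sub_castSucc {M : Type*} [AddCommGroup M] (g : Fin (n + 1) → M)
    (j : Fin (n + 1)) :
    ∑ i ∈ univ.filter (fun i : Fin n => (i : ℕ) < j), (g i.succ - g i.castSucc) = g j - g 0 := by
  induction j using Fin.induction with
  | zero => simp
  | succ j ih =>
    have hinsert : univ.filter (fun i : Fin n => (i : ℕ) < j.succ) =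
        insert j (univ.filter fun i : Fin n => (i : ℕ) < j.castSucc) := by
      ext i
      simp only [mem_filter, mem_univ, true_and, mem_insert, Fin.val_succ, Fin.val_castSucc,
        Fin.ext_iff]
      omega
    rw [hinsert, sum_insert (by simp), ih]
    abel

lemma edgesIco_mono_right (a : ℕ) : Monotone fun m => edgesIco n a (a + m) := by
  intro m m' h i
  simp only [edgesIco, mem_filter, mem_univ, true_and]
  omega

lemma edgesIco_mono_left (b : ℕ) : Monotone fun m => edgesIco n (b - m) b := by
  intro m m' h i
  simp only [edgesIco, mem_filter, mem_univ, true_and]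
  omega

variable {Ω : Type*}

noncomputable def edgeNoise (r : Fin (n + 1) → ℝ) (T : Fin n → ℕ)
    (X : ∀ i : Fin n, Fin (T i) → Ω → ℝ) (p : Σ i : Fin n, Fin (T i)) (ω : Ω) : ℝ :=
  (T p.1 : ℝ)⁻¹ * (X p.1 p.2 ω - (r p.1.succ - r p.1.castSucc))

variable {T : Fin n → ℕ}

lemma sum_sigma_edgeNoise (r : Fin (n + 1) → ℝ) (X : ∀ i : Fin n, Fin (T i) → Ω → ℝ)
    (hT : ∀ i, 0 < T i) (E : Finset (Fin n)) (ω : Ω) :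
    ∑ p ∈ E.sigma fun _ => univ, edgeNoise r T X p ω =
      ∑ i ∈ E, ((1 / (T i : ℝ)) * ∑ t : Fin (T i), X i t ω - (r i.succ - r i.castSucc)) := by
  rw [sum_sigma]
  refine sum_congr rfl fun i _ => ?_
  have hTi : (T i : ℝ) ≠ 0 := Nat.cast_ne_zero.2 (hT i).ne'
  simp only [edgeNoise, ← mul_sum, sum_sub_distrib, sum_const, card_univ, Fintype.card_fin,
    nsmul_eq_mul]
  field_simp

lemma sum_edgesIco_edgeNoise (r : Fin (n + 1) → ℝ) (X : ∀ i : Fin n, Fin (T i) → Ω → ℝ)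
    (hT : ∀ i, 0 < T i) (Shat : Fin (n + 1) → Ω → ℝ)
    (hS : ∀ j ω, Shat j ω =
      ∑ i ∈ univ.filter (fun i : Fin n => (i : ℕ) < (j : ℕ)),
        (1 / (T i : ℝ)) * ∑ t : Fin (T i), X i t ω)
    {a b : Fin (n + 1)} (hab : a ≤ b) (ω : Ω) :
    ∑ p ∈ (edgesIco n a b).sigma fun _ => univ, edgeNoise r T X p ω =
      (Shat b ω - Shat a ω) - (r b - r a) := by
  have hprefix (j : Fin (n + 1)) : ∑ i ∈ univ.filter (fun i : Fin n => (i : ℕ) < (j : ℕ)),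
      ((1 / (T i : ℝ)) * ∑ t : Fin (T i), X i t ω - (r i.succ - r i.castSucc)) =
        Shat j ω - (r j - r 0) := by
    rw [sum_sub_distrib, sum_filter_lt_succ_sub_castSucc, hS]
  rw [sum_sigma_edgeNoise r X hT, sum_edgesIco_eq_sub _ hab, hprefix, hprefix]
  abel

lemma exists_blockSum_ge_of_empirical_le (r : Fin (n + 1) → ℝ)
    (X : ∀ i : Fin n, Fin (T i) → Ω → ℝ) (hT : ∀ i, 0 < T i) (Shat : Fin (n + 1) → Ω → ℝ)
    (hS : ∀ j ω, Shat j ω =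
      ∑ i ∈ univ.filter (fun i : Fin n => (i : ℕ) < (j : ℕ)),
        (1 / (T i : ℝ)) * ∑ t : Fin (T i), X i t ω)
    {a k : Fin (n + 1)} {ω : Ω} (hk : Shat a ω ≤ Shat k ω) {s : ℝ} (hs : s ≤ r a - r k) :
    (∃ m ≤ n, s ≤ ∑ p ∈ (edgesIco n a (a + m)).sigma fun _ => univ, edgeNoise r T X p ω) ∨
      ∃ m ≤ n, s ≤ ∑ p ∈ (edgesIco n (a - m) a).sigma fun _ => univ, -edgeNoise r T X p ω := by
  rcases le_total a k with hak | hka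
  · refine Or.inl ⟨k - a, by omega, ?_⟩
    rw [Nat.add_sub_cancel' (Fin.le_iff_val_le_val.1 hak),
      sum_edgesIco_edgeNoise r X hT Shat hS hak]
    linarith
  · refine Or.inr ⟨a - k, by omega, ?_⟩
    rw [Nat.sub_sub_self (Fin.le_iff_val_le_val.1 hka), sum_neg_distrib,
      sum_edgesIco_edgeNoise r X hT Shat hS hka]
    linarith

variable [MeasurableSpace Ω] {μ : Measure Ω} [IsProbabilityMeasure μ]
  {r : Fin (n + 1) → ℝ} {X : ∀ i : Fin n, Fin (T i) → Ω → ℝ}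

lemma hasSubgaussianMGF_edgeNoise (hmeas : ∀ i t, Measurable (X i t))
    (hmean : ∀ i t, ∫ ω, X i t ω ∂μ = r i.succ - r i.castSucc)
    (hbound : ∀ i t, ∀ᵐ ω ∂μ, X i t ω ∈ Set.Icc (-1 : ℝ) 1) (p : Σ i : Fin n, Fin (T i)) :
    HasSubgaussianMGF (edgeNoise r T X p) ((T p.1 : NNReal)⁻¹ ^ 2) μ := by
  have h := (hasSubgaussianMGF_of_mem_Icc (hmeas p.1 p.2).aemeasurable (hbound p.1 p.2)).const_mul
    (T p.1 : ℝ)⁻¹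
  rw [hmean] at h
  convert h using 1
  · rfl
  · apply NNReal.eq
    -- `const_mul` states its constant as an anonymous-constructor subtype, which `rw` cannot match
    erw [NNReal.coe_mul]
    norm_num
    rfl

lemma integral_edgeNoise (hmeas : ∀ i t, Measurable (X i t))
    (hmean : ∀ i t, ∫ ω, X i t ω ∂μ = r i.succ - r i.castSucc)
    (hbound : ∀ i t, ∀ᵐ ω ∂μ, X i t ω ∈ Set.Icc (-1 : ℝ) 1) (p : Σ i : Fin n, Fin (T i)) :
    μ[edgeNoise r T X p] = 0 := by
  simp only [edgeNoise]
  rw [integral_const_mul, integral_sub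
    (Integrable.of_mem_Icc _ _ (hmeas p.1 p.2).aemeasurable (hbound p.1 p.2)) (integrable_const _),
    hmean, integral_const, probReal_univ, one_smul, sub_self, mul_zero]

lemma measure_exists_le_blockSum_le {Y : (Σ i : Fin n, Fin (T i)) → Ω → ℝ}
    (hY : ∀ p, Measurable (Y p)) (hindep : iIndepFun Y μ)
    (hsubG : ∀ p, HasSubgaussianMGF (Y p) ((T p.1 : NNReal)⁻¹ ^ 2) μ) (hmean : ∀ p, μ[Y p] = 0)
    {W : ℕ → Finset (Fin n)} (hW : Monotone W) (N : ℕ) {s : ℝ} (hs : 0 ≤ s) :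
    μ {ω | ∃ m ≤ N, s ≤ ∑ p ∈ (W m).sigma fun _ => univ, Y p ω} ≤
      ENNReal.ofReal (exp (-s ^ 2 / (2 * ∑ i, (T i : ℝ)⁻¹))) := by
  refine measure_exists_le_chainSum_le hY hindep hsubG hmean
    (fun m m' h => sigma_mono (hW h) fun _ => le_rfl) N hs ?_
  calc ∑ p ∈ (W N).sigma (fun _ => univ), (((T p.1 : NNReal)⁻¹ ^ 2 : NNReal) : ℝ)
      = ∑ i ∈ W N, (T i : ℝ) * (T i : ℝ)⁻¹ ^ 2 := by simp [sum_sigma]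
    _ = ∑ i ∈ W N, (T i : ℝ)⁻¹ := sum_congr rfl fun i _ => by
        rcases eq_or_ne (T i : ℝ) 0 with h | h
        · simp [h]
        · field_simp
    _ ≤ ∑ i, (T i : ℝ)⁻¹ :=
        sum_le_sum_of_subset_of_nonneg (subset_univ _) fun i _ _ => by positivity

end Line

lemma max_le_sub_of_lt_sub {ι : Type*} [Fintype ι] {r : ι → ℝ} {rstar ε : ℝ}
    (hbelow : (univ.filter fun j => r j < rstar).Nonempty) (hε : 0 ≤ ε) {j : ι}
    (hj : r j < rstar - ε) :
    max ε ((univ.filter fun j => r j < rstar).inf' hbelow fun j => rstar - r j) ≤ rstar - r j :=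
  max_le (by linarith) (inf'_le _ (mem_filter.2 ⟨mem_univ _, by linarith⟩))

lemma exp_neg_sq_div_le_half {ι : Type*} [Fintype ι] {T : ι → ℕ} {s δ : ℝ} (hs : s ≠ 0)
    (hδ : 0 < δ) (h : (∑ i, 4 / (T i : ℝ))⁻¹ ≥ (1 / s ^ 2) * log (2 / δ)) :
    exp (-s ^ 2 / (2 * ∑ i, (T i : ℝ)⁻¹)) ≤ δ / 2 := by
  set v := ∑ i, (T i : ℝ)⁻¹
  have hv : 0 ≤ v := sum_nonneg fun i _ => by positivity
  have hsum : ∑ i, 4 / (T i : ℝ) = 4 * v := by simp only [v, mul_sum, div_eq_mul_inv]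
  set x := s ^ 2 * (4 * v)⁻¹
  have hx : 0 ≤ x := by positivity
  have hlog : log (2 / δ) ≤ x := by
    rw [hsum] at h
    calc log (2 / δ) = s ^ 2 * ((1 / s ^ 2) * log (2 / δ)) := by field_simp
      _ ≤ x := mul_le_mul_of_nonneg_left h (sq_nonneg s)
  calc exp (-s ^ 2 / (2 * v)) = exp (-(2 * x)) := by congr 1; simp only [x]; ring
    _ ≤ exp (-log (2 / δ)) := exp_le_exp.2 (by linarith)
    _ = δ / 2 := by rw [exp_neg, exp_log (by positivity), inv_div]

lemma one_sub_ofReal_le_measure_of_compl_subset_union {Ω : Type*} [MeasurableSpace Ω]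
    {μ : Measure Ω} [IsProbabilityMeasure μ] {s A B : Set Ω} {δ : ℝ} (hδ : 0 ≤ δ)
    (hAB : sᶜ ⊆ A ∪ B) (hA : μ A ≤ ENNReal.ofReal (δ / 2)) (hB : μ B ≤ ENNReal.ofReal (δ / 2)) :
    1 - ENNReal.ofReal δ ≤ μ s := by
  refine tsub_le_iff_right.2 ?_
  calc 1 ≤ μ s + μ sᶜ := by simpa using measure_univ_le_add_compl (μ := μ) s
    _ ≤ μ s + (ENNReal.ofReal (δ / 2) + ENNReal.ofReal (δ / 2)) := by
        gcongr
        exact (measure_mono hAB).trans ((measure_union_le _ _).trans (add_le_add hA hB))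
    _ = μ s + ENNReal.ofReal δ := by
        rw [← ENNReal.ofReal_add (by positivity) (by positivity), add_halves]

theorem line_graph_PAC_general
    {Ω : Type*} [MeasureSpace Ω] [IsProbabilityMeasure (ℙ : Measure Ω)]
    (n : ℕ) (r : Fin (n + 1) → ℝ) (rstar u : ℝ)
    (hstar : rstar = Finset.univ.sup' Finset.univ_nonempty r)
    (hbelow : (Finset.univ.filter (fun j => r j < rstar)).Nonempty)
    (hu : u = (Finset.univ.filter (fun j => r j < rstar)).inf' hbelow
      (fun j => rstar - r j))
    (T : Fin n → ℕ) (hT : ∀ i, 0 < T i)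
    (X : ∀ i : Fin n, Fin (T i) → Ω → ℝ)
    (hmeas : ∀ i t, Measurable (X i t))
    (hindep : iIndepFun
      (fun p : Σ i : Fin n, Fin (T i) => X p.1 p.2) ℙ)
    (hmean : ∀ i t, ∫ ω, X i t ω ∂ℙ = r i.succ - r i.castSucc)
    (hbound : ∀ i t, ∀ᵐ ω ∂ℙ, X i t ω ∈ Set.Icc (-1 : ℝ) 1)
    (ε δ : ℝ) (hε : 0 < ε) (hδ : 0 < δ)
    (hsample : (∑ i : Fin n, 4 / (T i : ℝ))⁻¹ ≥
      (1 / (max ε u) ^ 2) * Real.log (2 / δ))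
    (Shat : Fin (n + 1) → Ω → ℝ)
    (hS : ∀ j ω, Shat j ω =
      ∑ i ∈ Finset.univ.filter (fun i : Fin n => (i : ℕ) < (j : ℕ)),
        (1 / (T i : ℝ)) * ∑ t : Fin (T i), X i t ω)
    (k : Ω → Fin (n + 1)) (hk : ∀ ω j, Shat j ω ≤ Shat (k ω) ω) :
    1 - ENNReal.ofReal δ ≤ ℙ {ω | rstar - ε ≤ r (k ω)} := by
  obtain ⟨a, -, ha⟩ := exists_mem_eq_sup' univ_nonempty r
  set Z := edgeNoise r T X
  have hZ (p : Σ i : Fin n, Fin (T i)) : Measurable (Z p) :=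
    ((hmeas p.1 p.2).sub_const _).const_mul _
  have hZindep : iIndepFun Z ℙ :=
    hindep.comp _ fun p => (measurable_id.sub_const _).const_mul _
  have hZsubG := hasSubgaussianMGF_edgeNoise hmeas hmean hbound
  have hZmean := integral_edgeNoise hmeas hmean hbound
  have hs : 0 < max ε u := hε.trans_le (le_max_left _ _)
  have htail := ENNReal.ofReal_le_ofReal (exp_neg_sq_div_le_half hs.ne' hδ hsample)
  have hright := (measure_exists_le_blockSum_le hZ hZindep hZsubG hZmean
    (edgesIco_mono_right a) n hs.le).trans htail
  have hleft := (measure_exists_le_blockSum_le (Y := fun p ω => -Z p ω) (fun p => (hZ p).neg)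
    (hZindep.comp (fun _ x => -x) fun _ => measurable_neg) (fun p => (hZsubG p).neg)
    (fun p => by rw [integral_neg, hZmean, neg_zero]) (edgesIco_mono_left a) n hs.le).trans htail
  refine one_sub_ofReal_le_measure_of_compl_subset_union hδ.le (fun ω hω => ?_) hright hleft
  exact exists_blockSum_ge_of_empirical_le r X hT Shat hS (hk ω a)
    (hstar.trans ha ▸ hu ▸ max_le_sub_of_lt_sub hbelow hε.le (not_le.1 hω))

/-- PAC guarantee for Algorithm 1 on a line graph with `n + 1` nodes `0, …, n`
(so `n` edges `(i, i+1)`), reward gap `u`, edge samples bounded in `[−1,1]`,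
per-edge sample sizes `T i` satisfying
`(∑_i 4 / T i)⁻¹ ≥ (1/ε̃²)·log(2/δ)` with `ε̃ = max ε u`:
the node `k` maximizing the empirical prefix sums satisfies `r k ≥ r* − ε`
with probability at least `1 − δ`. -/
theorem line_graph_PAC
    {Ω : Type*} [MeasureSpace Ω] [IsProbabilityMeasure (ℙ : Measure Ω)]
    (n : ℕ) (hn : 1 ≤ n) (r : Fin (n + 1) → ℝ) (rstar u : ℝ)
    (hstar : rstar = Finset.univ.sup' Finset.univ_nonempty r)
    (hbelow : (Finset.univ.filter (fun j => r j < rstar)).Nonempty)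
    (hu : u = (Finset.univ.filter (fun j => r j < rstar)).inf' hbelow
      (fun j => rstar - r j))
    (T : Fin n → ℕ) (hT : ∀ i, 0 < T i)
    (X : ∀ i : Fin n, Fin (T i) → Ω → ℝ)
    (hmeas : ∀ i t, Measurable (X i t))
    (hindep : iIndepFun
      (fun p : Σ i : Fin n, Fin (T i) => X p.1 p.2) ℙ)
    (hint : ∀ i t, Integrable (X i t) ℙ)
    (hmean : ∀ i t, ∫ ω, X i t ω ∂ℙ = r i.succ - r i.castSucc)
    (hbound : ∀ i t, ∀ᵐ ω ∂ℙ, X i t ω ∈ Set.Icc (-1 : ℝ) 1)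
    (ε δ : ℝ) (hε : 0 < ε) (hδ : 0 < δ) (hδ1 : δ < 1)
    (hsample : (∑ i : Fin n, 4 / (T i : ℝ))⁻¹ ≥
      (1 / (max ε u) ^ 2) * Real.log (2 / δ))
    (Shat : Fin (n + 1) → Ω → ℝ)
    (hS : ∀ j ω, Shat j ω =
      ∑ i ∈ Finset.univ.filter (fun i : Fin n => (i : ℕ) < (j : ℕ)),
        (1 / (T i : ℝ)) * ∑ t : Fin (T i), X i t ω)
    (k : Ω → Fin (n + 1)) (hk : ∀ ω j, Shat j ω ≤ Shat (k ω) ω) :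
    1 - ENNReal.ofReal δ ≤ ℙ {ω | rstar - ε ≤ r (k ω)} :=
  line_graph_PAC_general n r rstar u hstar hbelow hu T hT X hmeas hindep hmean hbound ε δ hε hδ
    hsample Shat hS k hk
end

section
/- Let G = (V, E) be a connected undirected graph on n nodes with diameter D and node rewards r : V → ℝ. For each ordered pair of distinct nodes (i, j) fix a shortest path π_{ij} from i to j. Suppose each edge of G is sampled T times, all samples of all edges being mutually independent, each sample of edge (k,l) taking values in [−1,1] with mean r_l − r_k; let Ê^{kl} denote the empirical average of edge (k,l), and for each pair (i,j) let Ê_{π_{ij}} = Σ_{(k,l) ∈ π_{ij}} Ê^{kl}. Fix ε > 0 and δ ∈ (0,1). If T ≥ (4D/ε²)·log(2n²/δ), then with probability at least 1 − δ, simultaneously for every ordered pair (i,j) of distinct nodes, | Ê_{π_{ij}} − (r_j − r_i) | ≤ ε. -/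
/-!
Orient every edge from its smaller to its larger endpoint. Along a trail the edges are distinct,
so up to these reorientations (sign flips) the samples read along a trail are a subfamily of the
independent family of edge samples. Since the edge means telescope along a path,
`T * (Ê_π - (r j - r i))` is a sum of `T * |π|` independent centred variables of range `2`, and
Hoeffding's inequality bounds the failure probability for one pair by
`2 exp (-ε² T / (2 |π|))`. For a shortest path `|π| ≤ D`, so the sample size makes this at most
`δ / n²`, and a union bound over the at most `n²` ordered pairs finishes the proof.
-/

open MeasureTheory ProbabilityTheory
open scoped NNReal

lemma exp_neg_sq_mul_div_le_inv {L D T ε K : ℝ} (hL : 0 < L) (hLD : L ≤ D) (hε : 0 < ε)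
    (hK : 1 ≤ K) (hT : 4 * D / ε ^ 2 * Real.log K ≤ T) :
    Real.exp (-(ε ^ 2 * T) / (2 * L)) ≤ K⁻¹ := by
  have hlog : 0 ≤ Real.log K := Real.log_nonneg hK
  have hLK : 2 * L * Real.log K ≤ ε ^ 2 * T :=
    calc 2 * L * Real.log K ≤ ε ^ 2 * (4 * D / ε ^ 2 * Real.log K) := by
          field_simp
          nlinarith
      _ ≤ ε ^ 2 * T := by gcongr
  rw [← Real.exp_log (by linarith : 0 < K), ← Real.exp_neg, Real.exp_le_exp,
    div_le_iff₀ (by positivity)]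
  linarith

namespace ProbabilityTheory

variable {Ω : Type*} {mΩ : MeasurableSpace Ω} {μ : Measure Ω}

lemma one_sub_ofReal_le_measure_iInter [IsProbabilityMeasure μ] {ι : Type*} [Fintype ι]
    {s : ι → Set Ω} {b : ℝ} (h : ∀ i, μ.real (s i)ᶜ ≤ b) :
    1 - ENNReal.ofReal (Fintype.card ι * b) ≤ μ (⋂ i, s i) := by
  have hcompl : μ.real (⋂ i, s i)ᶜ ≤ Fintype.card ι * b := by
    rw [Set.compl_iInter]
    calc μ.real (⋃ i, (s i)ᶜ) ≤ ∑ i, μ.real (s i)ᶜ := measureReal_iUnion_fintype_le _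
      _ ≤ ∑ _i : ι, b := Finset.sum_le_sum fun i _ => h i
      _ = Fintype.card ι * b := by rw [Finset.sum_const, Finset.card_univ, nsmul_eq_mul]
  rw [tsub_le_iff_right]
  calc 1 = μ ((⋂ i, s i) ∪ (⋂ i, s i)ᶜ) := by rw [Set.union_compl_self, measure_univ]
    _ ≤ μ (⋂ i, s i) + μ (⋂ i, s i)ᶜ := measure_union_le _ _
    _ ≤ μ (⋂ i, s i) + ENNReal.ofReal (Fintype.card ι * b) := by
      gcongr
      rw [← ofReal_measureReal]
      exact ENNReal.ofReal_le_ofReal hcompl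

lemma HasSubgaussianMGF.measureReal_abs_ge_le [IsFiniteMeasure μ] {X : Ω → ℝ} {c : ℝ≥0}
    (h : HasSubgaussianMGF X c μ) {ε : ℝ} (hε : 0 ≤ ε) :
    μ.real {ω | ε ≤ |X ω|} ≤ 2 * Real.exp (-ε ^ 2 / (2 * c)) := by
  have hsplit : {ω | ε ≤ |X ω|} ⊆ {ω | ε ≤ X ω} ∪ {ω | ε ≤ (-X) ω} :=
    fun ω (hω : ε ≤ |X ω|) => le_abs.mp hω
  calc μ.real {ω | ε ≤ |X ω|}
      ≤ μ.real {ω | ε ≤ X ω} + μ.real {ω | ε ≤ (-X) ω} :=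
        (measureReal_mono hsplit).trans (measureReal_union_le _ _)
    _ ≤ Real.exp (-ε ^ 2 / (2 * c)) + Real.exp (-ε ^ 2 / (2 * c)) :=
        add_le_add (h.measure_ge_le hε) (h.neg.measure_ge_le hε)
    _ = 2 * Real.exp (-ε ^ 2 / (2 * c)) := (two_mul _).symm

/-- **Hoeffding's inequality**, two-sided. -/
theorem measureReal_abs_sum_sub_integral_ge_le [IsProbabilityMeasure μ] {ι : Type*} [Fintype ι]
    {Y : ι → Ω → ℝ} (hind : iIndepFun Y μ) (hmeas : ∀ i, AEMeasurable (Y i) μ) {a b : ℝ}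
    (hbound : ∀ i, ∀ᵐ ω ∂μ, Y i ω ∈ Set.Icc a b) {ε : ℝ} (hε : 0 ≤ ε) :
    μ.real {ω | ε ≤ |∑ i, (Y i ω - μ[Y i])|} ≤
      2 * Real.exp (-2 * ε ^ 2 / (Fintype.card ι * (b - a) ^ 2)) := by
  have hcentered : iIndepFun (fun i ω => Y i ω - μ[Y i]) μ :=
    hind.comp (fun i (x : ℝ) => x - ∫ ω, Y i ω ∂μ) fun _ => measurable_sub_const _
  have hsum := HasSubgaussianMGF.sum_of_iIndepFun hcentered (s := Finset.univ)
    fun i _ => hasSubgaussianMGF_of_mem_Icc (hmeas i) (hbound i)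
  refine (hsum.measureReal_abs_ge_le hε).trans_eq ?_
  congr 2
  simp only [Finset.sum_const, Finset.card_univ, nsmul_eq_mul]
  push_cast
  rw [Real.norm_eq_abs, div_pow, sq_abs,
    show 2 * (Fintype.card ι * ((b - a) ^ 2 / 2 ^ 2)) = Fintype.card ι * (b - a) ^ 2 / 2 by ring,
    div_div_eq_mul_div]
  ring

end ProbabilityTheory

namespace SimpleGraph

variable {V : Type*} {G : SimpleGraph V}

def Dart.sortedEdge [LinearOrder V] (d : G.Dart) : {p : V × V // G.Adj p.1 p.2 ∧ p.1 < p.2} :=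
  ⟨(d.edge.inf, d.edge.sup), by
    rcases lt_or_gt_of_ne d.adj.ne with h | h <;>
      simp [Dart.edge, h, h.le, d.adj, d.adj.symm]⟩

lemma Dart.sortedEdge_eq_iff [LinearOrder V] {d d' : G.Dart} :
    d.sortedEdge = d'.sortedEdge ↔ d.edge = d'.edge := by
  simp [Dart.sortedEdge, Subtype.ext_iff, Sym2.inf_eq_inf_and_sup_eq_sup]

lemma Dart.apply_eq_ite_mul_sortedEdge [LinearOrder V] {R : Type*} [Ring R] {f : V → V → R}
    (hf : ∀ u v, f v u = -f u v) (d : G.Dart) :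
    f d.fst d.snd =
      (if d.fst < d.snd then 1 else -1) * f d.sortedEdge.1.1 d.sortedEdge.1.2 := by
  rcases lt_or_gt_of_ne d.adj.ne with h | h
  · simp [Dart.sortedEdge, Dart.edge, h, h.le]
  · simp [Dart.sortedEdge, Dart.edge, h.le, h.not_gt, hf d.snd d.fst]

lemma Walk.sum_darts_map_sub {R : Type*} [AddCommGroup R] (f : V → R) {i j : V}
    (w : G.Walk i j) :
    (w.darts.map fun d => f d.snd - f d.fst).sum = f j - f i := by
  induction w with
  | nil => simp
  | cons h p ih => simp [ih]

variable {Ω : Type*} [MeasurableSpace Ω] {μ : Measure Ω}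

lemma Walk.IsTrail.iIndepFun_darts [LinearOrder V] [DecidableEq V] {τ : Type*}
    {X : V → V → τ → Ω → ℝ} (hsym : ∀ u v t ω, X v u t ω = -X u v t ω)
    (hindep : iIndepFun
      (fun q : {p : V × V // G.Adj p.1 p.2 ∧ p.1 < p.2} × τ => X q.1.1.1 q.1.1.2 q.2) μ)
    {i j : V} {w : G.Walk i j} (hw : w.IsTrail) :
    iIndepFun (fun q : {d // d ∈ w.darts.toFinset} × τ => X q.1.1.fst q.1.1.snd q.2) μ := by
  have hinj : Function.Injective
      fun q : {d // d ∈ w.darts.toFinset} × τ => (q.1.1.sortedEdge, q.2) := by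
    rintro ⟨⟨d, hd⟩, t⟩ ⟨⟨d', hd'⟩, t'⟩ h
    obtain ⟨he, rfl⟩ := Prod.mk.inj h
    obtain rfl : d = d' := List.inj_on_of_nodup_map (f := Dart.edge) hw.edges_nodup
      (List.mem_toFinset.mp hd) (List.mem_toFinset.mp hd') (Dart.sortedEdge_eq_iff.mp he)
    rfl
  have := (hindep.precomp hinj).comp
    (fun q x => (if q.1.1.fst < q.1.1.snd then 1 else -1) * x) fun _ => measurable_const_mul _
  convert this using 2 with q
  funext ω
  exact Dart.apply_eq_ite_mul_sortedEdge (fun u v => hsym u v q.2 ω) q.1.1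

noncomputable def Walk.pathEstimate {T : ℕ} (X : V → V → Fin T → Ω → ℝ) {i j : V}
    (w : G.Walk i j) (ω : Ω) : ℝ :=
  (w.darts.map fun d => (1 / (T : ℝ)) * ∑ t, X d.fst d.snd t ω).sum

lemma Walk.mul_pathEstimate_sub_eq_sum [DecidableEq V] {T : ℕ} (hT : T ≠ 0)
    {X : V → V → Fin T → Ω → ℝ} {r : V → ℝ}
    (hmean : ∀ u v, G.Adj u v → ∀ t, ∫ ω, X u v t ω ∂μ = r v - r u)
    {i j : V} {w : G.Walk i j} (hw : w.darts.Nodup) (ω : Ω) :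
    T * (w.pathEstimate X ω - (r j - r i)) =
      ∑ q : {d // d ∈ w.darts.toFinset} × Fin T,
        (X q.1.1.fst q.1.1.snd q.2 ω - ∫ ω', X q.1.1.fst q.1.1.snd q.2 ω' ∂μ) := by
  have hcenter : ∀ d : G.Dart, ∑ t, (X d.fst d.snd t ω - ∫ ω', X d.fst d.snd t ω' ∂μ) =
      T * ((1 / (T : ℝ)) * ∑ t, X d.fst d.snd t ω - (r d.snd - r d.fst)) := by
    intro d
    simp only [hmean _ _ d.adj, Finset.sum_sub_distrib, Finset.sum_const, Finset.card_univ,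
      Fintype.card_fin, nsmul_eq_mul]
    field_simp
  rw [Fintype.sum_prod_type, Finset.sum_coe_sort w.darts.toFinset
    (fun d => ∑ t, (X d.fst d.snd t ω - ∫ ω', X d.fst d.snd t ω' ∂μ))]
  simp only [hcenter]
  rw [← Finset.mul_sum, Finset.sum_sub_distrib, List.sum_toFinset _ hw, List.sum_toFinset _ hw,
    sum_darts_map_sub, pathEstimate]

structure IsEdgeSampling [LinearOrder V] (G : SimpleGraph V) (μ : Measure Ω) (r : V → ℝ) {T : ℕ}
    (X : V → V → Fin T → Ω → ℝ) : Prop where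
  measurable : ∀ u v t, Measurable (X u v t)
  antisymm : ∀ u v t ω, X v u t ω = -X u v t ω
  iIndepFun : iIndepFun
    (fun q : {p : V × V // G.Adj p.1 p.2 ∧ p.1 < p.2} × Fin T => X q.1.1.1 q.1.1.2 q.2) μ
  integral_eq : ∀ u v, G.Adj u v → ∀ t, ∫ ω, X u v t ω ∂μ = r v - r u
  mem_Icc : ∀ u v, G.Adj u v → ∀ t, ∀ᵐ ω ∂μ, X u v t ω ∈ Set.Icc (-1 : ℝ) 1

lemma Walk.IsTrail.measureReal_abs_pathEstimate_sub_ge_le [IsProbabilityMeasure μ]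
    [LinearOrder V] [DecidableEq V] {T : ℕ} {X : V → V → Fin T → Ω → ℝ} {r : V → ℝ}
    (hX : G.IsEdgeSampling μ r X) (hT : T ≠ 0) {i j : V} {w : G.Walk i j} (hw : w.IsTrail)
    {ε : ℝ} (hε : 0 ≤ ε) :
    μ.real {ω | ε ≤ |w.pathEstimate X ω - (r j - r i)|} ≤
      2 * Real.exp (-(ε ^ 2 * T) / (2 * w.length)) := by
  have hnodup : w.darts.Nodup := hw.edges_nodup.of_map _
  have hT' : (0 : ℝ) < T := by positivity
  have hevent : {ω | ε ≤ |w.pathEstimate X ω - (r j - r i)|} =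
      {ω | ε * T ≤ |∑ q : {d // d ∈ w.darts.toFinset} × Fin T,
        (X q.1.1.fst q.1.1.snd q.2 ω - ∫ ω', X q.1.1.fst q.1.1.snd q.2 ω' ∂μ)|} := by
    ext ω
    rw [Set.mem_ofPred_eq, Set.mem_ofPred_eq,
      ← w.mul_pathEstimate_sub_eq_sum hT hX.integral_eq hnodup ω,
      abs_mul, Nat.abs_cast, mul_comm (T : ℝ), mul_le_mul_iff_left₀ hT']
  have hcard : Fintype.card ({d // d ∈ w.darts.toFinset} × Fin T) = w.length * T := by
    rw [Fintype.card_prod, Fintype.card_coe, List.toFinset_card_of_nodup hnodup, length_darts,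
      Fintype.card_fin]
  rw [hevent]
  refine (measureReal_abs_sum_sub_integral_ge_le (hw.iIndepFun_darts hX.antisymm hX.iIndepFun)
    (fun _ => (hX.measurable _ _ _).aemeasurable) (fun q => hX.mem_Icc _ _ q.1.1.adj q.2)
    (by positivity)).trans_eq ?_
  rw [hcard]
  push_cast
  rw [show -2 * (ε * T) ^ 2 = -(ε ^ 2 * T) * (2 * T) by ring,
    show (w.length * T * (1 - -1) ^ 2 : ℝ) = 2 * w.length * (2 * T) by ring,
    mul_div_mul_right _ _ (by positivity)]

end SimpleGraph

theorem network_uniform_deviation_general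
    {Ω V : Type*} [MeasureSpace Ω] [IsProbabilityMeasure (ℙ : Measure Ω)]
    [Fintype V] [Nonempty V] [LinearOrder V]
    (G : SimpleGraph V) (hconn : G.Connected)
    (D : ℕ) (hD : G.diam = D)
    (r : V → ℝ)
    (π : ∀ i j : V, i ≠ j → G.Walk i j)
    (hπ : ∀ i j (h : i ≠ j), (π i j h).length = G.dist i j)
    (T : ℕ) (hT : 0 < T)
    (X : V → V → Fin T → Ω → ℝ)
    (hmeas : ∀ i j t, Measurable (X i j t))
    (hsym : ∀ i j t ω, X j i t ω = - X i j t ω)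
    (hindep : iIndepFun
      (fun q : {p : V × V // G.Adj p.1 p.2 ∧ p.1 < p.2} × Fin T =>
        X q.1.1.1 q.1.1.2 q.2) ℙ)
    (hmean : ∀ i j, G.Adj i j → ∀ t, ∫ ω, X i j t ω ∂ℙ = r j - r i)
    (hbound : ∀ i j, G.Adj i j → ∀ t, ∀ᵐ ω ∂ℙ, X i j t ω ∈ Set.Icc (-1 : ℝ) 1)
    (ε δ : ℝ) (hε : 0 < ε) (hδ : 0 < δ) (hδ1 : δ < 1)
    (hsample : (T : ℝ) ≥ (4 * D / ε ^ 2) *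
      Real.log (2 * (Fintype.card V : ℝ) ^ 2 / δ)) :
    1 - ENNReal.ofReal δ ≤
      ℙ {ω | ∀ i j (h : i ≠ j),
        |((π i j h).darts.map (fun d : G.Dart =>
            (1 / (T : ℝ)) * ∑ t : Fin T, X d.toProd.1 d.toProd.2 t ω)).sum
          - (r j - r i)| ≤ ε} := by
  have hK : 1 ≤ 2 * (Fintype.card V : ℝ) ^ 2 / δ := by
    have hn : (1 : ℝ) ≤ Fintype.card V := by exact_mod_cast Fintype.card_pos
    rw [le_div_iff₀ hδ]
    nlinarith
  have hX : G.IsEdgeSampling ℙ r X := ⟨hmeas, hsym, hindep, hmean, hbound⟩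
  have hpair : ∀ p : {p : V × V // p.1 ≠ p.2}, (ℙ : Measure Ω).real
      {ω | |(π _ _ p.2).pathEstimate X ω - (r p.1.2 - r p.1.1)| ≤ ε}ᶜ ≤
        2 * (2 * (Fintype.card V : ℝ) ^ 2 / δ)⁻¹ := by
    rintro ⟨⟨i, j⟩, h⟩
    have hpos : 0 < (π i j h).length := hπ i j h ▸ hconn.pos_dist_of_ne h
    have hlen : (π i j h).length ≤ D :=
      hD ▸ hπ i j h ▸ G.dist_le_diam (G.connected_iff_ediam_ne_top.mp hconn)
    have htrail := ((π i j h).isPath_of_length_eq_dist (hπ i j h)).isTrail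
    refine le_trans ?_ <| (htrail.measureReal_abs_pathEstimate_sub_ge_le hX hT.ne' hε.le).trans ?_
    · rw [Set.compl_ofPred]
      exact measureReal_mono <| Set.ofPred_subset_ofPred.mpr fun _ => le_of_not_ge
    gcongr
    exact exp_neg_sq_mul_div_le_inv (by exact_mod_cast hpos) (by exact_mod_cast hlen) hε hK
      hsample
  calc 1 - ENNReal.ofReal δ
      ≤ 1 - ENNReal.ofReal (Fintype.card {p : V × V // p.1 ≠ p.2} *
          (2 * (2 * (Fintype.card V : ℝ) ^ 2 / δ)⁻¹)) := by
        gcongr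
        calc _ ≤ (Fintype.card V : ℝ) ^ 2 * (2 * (2 * (Fintype.card V : ℝ) ^ 2 / δ)⁻¹) := by
              gcongr
              exact_mod_cast (Fintype.card_subtype_le _).trans_eq (by rw [Fintype.card_prod, sq])
          _ = δ := by field_simp
    _ ≤ ℙ (⋂ p : {p : V × V // p.1 ≠ p.2},
          {ω | |(π _ _ p.2).pathEstimate X ω - (r p.1.2 - r p.1.1)| ≤ ε}) :=
        one_sub_ofReal_le_measure_iInter hpair
    _ ≤ _ := measure_mono fun ω hω i j h => Set.mem_iInter.mp hω ⟨(i, j), h⟩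

/-- Per-phase estimation guarantee for the NNE algorithm: on a connected graph
with `n` nodes and diameter `D`, with a fixed shortest path `π i j` for each
ordered pair of distinct nodes, if every edge is sampled `T ≥ (4D/ε²)·log(2n²/δ)`
times (samples in `[−1,1]`, oriented mean `r l − r k`, mutually independent),
then with probability at least `1 − δ`, simultaneously for all pairs `(i,j)`,
the composed empirical path estimate is within `ε` of `r j − r i`. -/
theorem network_uniform_deviation
    {Ω V : Type*} [MeasureSpace Ω] [IsProbabilityMeasure (ℙ : Measure Ω)]
    [Fintype V] [Nonempty V] [DecidableEq V] [LinearOrder V]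
    (G : SimpleGraph V) [DecidableRel G.Adj] (hconn : G.Connected)
    (D : ℕ) (hD : G.diam = D)
    (r : V → ℝ)
    (π : ∀ i j : V, i ≠ j → G.Walk i j)
    (hπ : ∀ i j (h : i ≠ j), (π i j h).length = G.dist i j)
    (T : ℕ) (hT : 0 < T)
    (X : V → V → Fin T → Ω → ℝ)
    (hmeas : ∀ i j t, Measurable (X i j t))
    (hsym : ∀ i j t ω, X j i t ω = - X i j t ω)
    (hindep : iIndepFun
      (fun q : {p : V × V // G.Adj p.1 p.2 ∧ p.1 < p.2} × Fin T =>
        X q.1.1.1 q.1.1.2 q.2) ℙ)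
    (hint : ∀ i j, G.Adj i j → ∀ t, Integrable (X i j t) ℙ)
    (hmean : ∀ i j, G.Adj i j → ∀ t, ∫ ω, X i j t ω ∂ℙ = r j - r i)
    (hbound : ∀ i j, G.Adj i j → ∀ t, ∀ᵐ ω ∂ℙ, X i j t ω ∈ Set.Icc (-1 : ℝ) 1)
    (ε δ : ℝ) (hε : 0 < ε) (hδ : 0 < δ) (hδ1 : δ < 1)
    (hsample : (T : ℝ) ≥ (4 * D / ε ^ 2) *
      Real.log (2 * (Fintype.card V : ℝ) ^ 2 / δ)) :
    1 - ENNReal.ofReal δ ≤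
      ℙ {ω | ∀ i j (h : i ≠ j),
        |((π i j h).darts.map (fun d : G.Dart =>
            (1 / (T : ℝ)) * ∑ t : Fin T, X d.toProd.1 d.toProd.2 t ω)).sum
          - (r j - r i)| ≤ ε} :=
  network_uniform_deviation_general G hconn D hD r π hπ T hT X hmeas hsym hindep hmean hbound ε δ hε
    hδ hδ1 hsample
end

section
/- Let A₀ be a d × d real symmetric positive definite matrix and x ∈ ℝ^d. For t = 0, 1, 2, …, define A_t = A₀ + t·x·xᵀ. Then for every positive integer T, Σ_{t=1}^{T} xᵀ A_t^{−1} x ≤ log( det(A_T) / det(A₀) ). -/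
open Matrix

/-!
Put `u = xᵀ A₀⁻¹ x ≥ 0`. By the matrix determinant lemma `det A_T = det A₀ · (1 + T u)`, and by
the Sherman–Morrison formula `A_t⁻¹ x = A₀⁻¹ x / (1 + t u)`, so the `t`-th summand is
`u / (1 + t u) = 1 - (1 + (t-1) u) / (1 + t u) ≤ log (1 + t u) - log (1 + (t-1) u)`,
and the sum telescopes.
-/

namespace Matrix

variable {m α : Type*} [Fintype m] [DecidableEq m]

theorem det_add_vecMulVec [CommRing α] {A : Matrix m m α} (hA : IsUnit A.det) (u v : m → α) :
    (A + vecMulVec u v).det = A.det * (1 + v ⬝ᵥ A⁻¹ *ᵥ u) := by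
  have hfactor : A + vecMulVec u v = A * (1 + vecMulVec (A⁻¹ *ᵥ u) v) := by
    rw [Matrix.mul_add, Matrix.mul_one, mul_vecMulVec, mulVec_mulVec, mul_nonsing_inv A hA,
      one_mulVec]
  rw [hfactor, det_mul, vecMulVec_eq Unit, det_one_add_replicateCol_mul_replicateRow]

theorem inv_add_vecMulVec_mulVec [Field α] {A : Matrix m m α} (hA : IsUnit A.det) (u v : m → α)
    (hq : 1 + v ⬝ᵥ A⁻¹ *ᵥ u ≠ 0) :
    (A + vecMulVec u v)⁻¹ *ᵥ u = (1 + v ⬝ᵥ A⁻¹ *ᵥ u)⁻¹ • A⁻¹ *ᵥ u := by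
  set q := v ⬝ᵥ A⁻¹ *ᵥ u
  have hB : IsUnit (A + vecMulVec u v).det := by
    rw [det_add_vecMulVec hA]
    exact hA.mul (isUnit_iff_ne_zero.2 hq)
  have hsolve : (A + vecMulVec u v) *ᵥ ((1 + q)⁻¹ • A⁻¹ *ᵥ u) = u := by
    rw [mulVec_smul, add_mulVec, mulVec_mulVec, mul_nonsing_inv A hA, one_mulVec,
      vecMulVec_mulVec, op_smul_eq_smul, show u + q • u = (1 + q) • u by rw [add_smul, one_smul],
      smul_smul, inv_mul_cancel₀ hq, one_smul]
  calc (A + vecMulVec u v)⁻¹ *ᵥ u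
      = (A + vecMulVec u v)⁻¹ *ᵥ ((A + vecMulVec u v) *ᵥ ((1 + q)⁻¹ • A⁻¹ *ᵥ u)) := by
        rw [hsolve]
    _ = (1 + q)⁻¹ • A⁻¹ *ᵥ u := by
        rw [mulVec_mulVec, nonsing_inv_mul _ hB, one_mulVec]

end Matrix

theorem Real.sum_Icc_div_one_add_mul_le_log {u : ℝ} (hu : 0 ≤ u) (T : ℕ) :
    ∑ t ∈ Finset.Icc 1 T, u / (1 + t * u) ≤ Real.log (1 + T * u) := by
  induction T with
  | zero => simp
  | succ T ih =>
    have hprev : 0 < 1 + (T : ℝ) * u := by positivity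
    have hnext : 0 < 1 + ((T + 1 : ℕ) : ℝ) * u := by positivity
    have hstep : u / (1 + ((T + 1 : ℕ) : ℝ) * u)
        ≤ Real.log (1 + ((T + 1 : ℕ) : ℝ) * u) - Real.log (1 + T * u) := by
      have := Real.one_sub_inv_le_log_of_pos (div_pos hnext hprev)
      rw [Real.log_div hnext.ne' hprev.ne', inv_div] at this
      convert this using 1
      field_simp
      push_cast
      ring
    rw [Finset.sum_Icc_succ_top (by omega)]
    linarith

theorem elliptical_potential_general
    (d : ℕ) (A0 : Matrix (Fin d) (Fin d) ℝ)
    (hpos : A0.PosDef)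
    (x : Fin d → ℝ) (T : ℕ) :
    ∑ t ∈ Finset.Icc 1 T,
        x ⬝ᵥ ((A0 + (t : ℝ) • vecMulVec x x)⁻¹ *ᵥ x)
      ≤ Real.log ((A0 + (T : ℝ) • vecMulVec x x).det / A0.det) := by
  set u := x ⬝ᵥ A0⁻¹ *ᵥ x
  have hu : 0 ≤ u := by simpa using hpos.inv.posSemidef.dotProduct_mulVec_nonneg x
  have hA0 : IsUnit A0.det := (isUnit_iff_isUnit_det A0).1 hpos.isUnit
  have hupdate (s : ℝ) : A0 + s • vecMulVec x x = A0 + vecMulVec x (s • x) := by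
    rw [vecMulVec_smul]
  have hgain (s : ℝ) : s • x ⬝ᵥ A0⁻¹ *ᵥ x = s * u := by rw [smul_dotProduct, smul_eq_mul]
  have hterm (t : ℕ) : x ⬝ᵥ ((A0 + (t : ℝ) • vecMulVec x x)⁻¹ *ᵥ x) = u / (1 + t * u) := by
    have hden : 1 + (t : ℝ) * u ≠ 0 := by positivity
    rw [hupdate, inv_add_vecMulVec_mulVec hA0 _ _ (by rwa [hgain]), hgain, dotProduct_smul,
      smul_eq_mul, inv_mul_eq_div]
  have hdet : (A0 + (T : ℝ) • vecMulVec x x).det / A0.det = 1 + T * u := by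
    rw [hupdate, det_add_vecMulVec hA0, hgain, mul_div_cancel_left₀ _ hA0.ne_zero]
  rw [hdet, Finset.sum_congr rfl fun t _ => hterm t]
  exact Real.sum_Icc_div_one_add_mul_le_log hu T

/-- Elliptical potential inequality: for a symmetric positive definite `A₀` and
`A t = A₀ + t·x·xᵀ`, one has `∑_{t=1}^{T} xᵀ A_t⁻¹ x ≤ log(det A_T / det A₀)`. -/
theorem elliptical_potential
    (d : ℕ) (A0 : Matrix (Fin d) (Fin d) ℝ)
    (hpos : A0.PosDef) (hsym : A0.IsSymm)
    (x : Fin d → ℝ) (T : ℕ) (hT : 0 < T) :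
    ∑ t ∈ Finset.Icc 1 T,
        x ⬝ᵥ ((A0 + (t : ℝ) • vecMulVec x x)⁻¹ *ᵥ x)
      ≤ Real.log ((A0 + (T : ℝ) • vecMulVec x x).det / A0.det) :=
  elliptical_potential_general d A0 hpos x T
end
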